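/- arXiv:2310.15351 — 4 statements merged into one kernel-verified Lean document; each statement's English description precedes it below -/
import Mathlib

section
/- Let H be a Hilbert space and let Ẑ, Z be bounded, self-adjoint, positive definite operators on H with bounded inverses. If the operator norm of M := Ẑ^{-1/2}(Z - Ẑ)Z^{-1/2} satisfies ‖M‖ ≤ c for some c ∈ (0,1), then for every ψ ∈ H, ⟨ψ, Ẑ^{-1}ψ⟩ ≤ (1-c)^{-1} ⟨ψ, Z^{-1}ψ⟩. -/
open scoped RealInnerProductSpace

/-! If `x = ‖Ẑ^{-1/2} ψ‖` and `y = ‖Z^{-1/2} ψ‖`, the resolvent identity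
`Ẑ⁻¹ - Z⁻¹ = Ẑ⁻¹ (Z - Ẑ) Z⁻¹` gives `x² - y² = ⟪Ẑ^{-1/2} ψ, M Z^{-1/2} ψ⟫ ≤ c x y`
by Cauchy–Schwarz. Since `c x y ≤ c max(x, y)²`, this forces `(1 - c) x² ≤ y²`. -/

theorem sub_eq_mul_sub_mul_of_mul_eq_one {R : Type*} [Ring R] {a a' b b' : R}
    (ha : a' * a = 1) (hb : b * b' = 1) : a' - b' = a' * (b - a) * b' := by
  rw [mul_sub, sub_mul, mul_assoc a' b, hb, ha, mul_one, one_mul]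

theorem sq_le_inv_one_sub_mul_sq {x y c : ℝ} (hx : 0 ≤ x) (hy : 0 ≤ y) (hc₀ : 0 ≤ c)
    (hc₁ : c < 1) (h : x ^ 2 - y ^ 2 ≤ c * (x * y)) : x ^ 2 ≤ (1 - c)⁻¹ * y ^ 2 := by
  rw [inv_mul_eq_div, le_div_iff₀ (by linarith)]
  rcases le_total x y with hxy | hyx
  · nlinarith [mul_le_mul hxy hxy hx hy, mul_nonneg hc₀ (sq_nonneg x)]
  · nlinarith [mul_le_mul_of_nonneg_left (mul_le_mul_of_nonneg_left hyx hx) hc₀]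

section SelfAdjoint

variable {H : Type*} [NormedAddCommGroup H] [InnerProductSpace ℝ H] [CompleteSpace H]
  {S : H →L[ℝ] H}

theorem IsSelfAdjoint.inner_comp_apply (hS : IsSelfAdjoint S) (T : H →L[ℝ] H) (x y : H) :
    ⟪x, (S ∘L T) y⟫ = ⟪S x, T y⟫ :=
  (hS.isSymmetric x (T y)).symm

theorem IsSelfAdjoint.inner_comp_self_apply (hS : IsSelfAdjoint S) (x : H) :
    ⟪x, (S ∘L S) x⟫ = ‖S x‖ ^ 2 := by
  rw [hS.inner_comp_apply, real_inner_self_eq_norm_sq]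

end SelfAdjoint

theorem real_inner_map_le_opNorm_mul {H : Type*} [NormedAddCommGroup H] [InnerProductSpace ℝ H]
    (T : H →L[ℝ] H) (x y : H) : ⟪x, T y⟫ ≤ ‖T‖ * (‖x‖ * ‖y‖) :=
  calc ⟪x, T y⟫ ≤ ‖x‖ * ‖T y‖ := real_inner_le_norm x (T y)
    _ ≤ ‖x‖ * (‖T‖ * ‖y‖) := by gcongr; exact T.le_opNorm y
    _ = ‖T‖ * (‖x‖ * ‖y‖) := by ring

theorem stmt_0_general {H : Type*} [NormedAddCommGroup H] [InnerProductSpace ℝ H] [CompleteSpace H]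
    (Zh Z Zhinv Zinv Zhsqrtinv Zsqrtinv : H →L[ℝ] H)
    (hZhinv₂ : Zhinv ∘L Zh = 1)
    (hZinv₁ : Z ∘L Zinv = 1)
    -- `Zhsqrtinv` is the (self-adjoint, positive) inverse square root of `Ẑ`
    (hZhs_sa : IsSelfAdjoint Zhsqrtinv)
    (hZhs : Zhsqrtinv ∘L Zhsqrtinv = Zhinv)
    -- `Zsqrtinv` is the (self-adjoint, positive) inverse square root of `Z`
    (hZs_sa : IsSelfAdjoint Zsqrtinv)
    (hZs : Zsqrtinv ∘L Zsqrtinv = Zinv)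
    (c : ℝ) (hc : c ∈ Set.Ioo (0 : ℝ) 1)
    (hM : ‖Zhsqrtinv ∘L (Z - Zh) ∘L Zsqrtinv‖ ≤ c) :
    ∀ ψ : H, ⟪ψ, Zhinv ψ⟫ ≤ (1 - c)⁻¹ * ⟪ψ, Zinv ψ⟫ := by
  intro ψ
  set M := Zhsqrtinv ∘L (Z - Zh) ∘L Zsqrtinv
  have hresolvent : Zhinv - Zinv = Zhsqrtinv ∘L M ∘L Zsqrtinv := by
    rw [sub_eq_mul_sub_mul_of_mul_eq_one hZhinv₂ hZinv₁, ← hZhs, ← hZs]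
    rfl
  have hdiff : ‖Zhsqrtinv ψ‖ ^ 2 - ‖Zsqrtinv ψ‖ ^ 2
      ≤ c * (‖Zhsqrtinv ψ‖ * ‖Zsqrtinv ψ‖) :=
    calc ‖Zhsqrtinv ψ‖ ^ 2 - ‖Zsqrtinv ψ‖ ^ 2 = ⟪ψ, (Zhinv - Zinv) ψ⟫ := by
          rw [sub_apply, inner_sub_right, ← hZhs, ← hZs,
            hZhs_sa.inner_comp_self_apply, hZs_sa.inner_comp_self_apply]
      _ = ⟪Zhsqrtinv ψ, M (Zsqrtinv ψ)⟫ := by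
          rw [hresolvent, hZhs_sa.inner_comp_apply, ContinuousLinearMap.comp_apply]
      _ ≤ ‖M‖ * (‖Zhsqrtinv ψ‖ * ‖Zsqrtinv ψ‖) := real_inner_map_le_opNorm_mul M _ _
      _ ≤ c * (‖Zhsqrtinv ψ‖ * ‖Zsqrtinv ψ‖) := by gcongr
  rw [← hZhs, ← hZs, hZhs_sa.inner_comp_self_apply, hZs_sa.inner_comp_self_apply]
  exact sq_le_inv_one_sub_mul_sq (norm_nonneg _) (norm_nonneg _) hc.1.le hc.2 hdiff

/-- If `M = Ẑ^{-1/2} (Z - Ẑ) Z^{-1/2}` has operator norm at most `c ∈ (0,1)`,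
then `⟨ψ, Ẑ⁻¹ ψ⟩ ≤ (1 - c)⁻¹ ⟨ψ, Z⁻¹ ψ⟩` for every `ψ`. -/
theorem stmt_0 {H : Type*} [NormedAddCommGroup H] [InnerProductSpace ℝ H] [CompleteSpace H]
    (Zh Z Zhinv Zinv Zhsqrtinv Zsqrtinv : H →L[ℝ] H)
    (hZh_sa : IsSelfAdjoint Zh) (hZ_sa : IsSelfAdjoint Z)
    (hZh_pos : ∀ ψ : H, ψ ≠ 0 → 0 < ⟪ψ, Zh ψ⟫)
    (hZ_pos : ∀ ψ : H, ψ ≠ 0 → 0 < ⟪ψ, Z ψ⟫)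
    (hZhinv₁ : Zh ∘L Zhinv = 1) (hZhinv₂ : Zhinv ∘L Zh = 1)
    (hZinv₁ : Z ∘L Zinv = 1) (hZinv₂ : Zinv ∘L Z = 1)
    -- `Zhsqrtinv` is the (self-adjoint, positive) inverse square root of `Ẑ`
    (hZhs_sa : IsSelfAdjoint Zhsqrtinv)
    (hZhs : Zhsqrtinv ∘L Zhsqrtinv = Zhinv)
    -- `Zsqrtinv` is the (self-adjoint, positive) inverse square root of `Z`
    (hZs_sa : IsSelfAdjoint Zsqrtinv)
    (hZs : Zsqrtinv ∘L Zsqrtinv = Zinv)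
    (c : ℝ) (hc : c ∈ Set.Ioo (0 : ℝ) 1)
    (hM : ‖Zhsqrtinv ∘L (Z - Zh) ∘L Zsqrtinv‖ ≤ c) :
    ∀ ψ : H, ⟪ψ, Zhinv ψ⟫ ≤ (1 - c)⁻¹ * ⟪ψ, Zinv ψ⟫ :=
  stmt_0_general Zh Z Zhinv Zinv Zhsqrtinv Zsqrtinv hZhinv₂ hZinv₁ hZhs_sa hZhs hZs_sa hZs c hc hM
end

section
/- Let H be a Hilbert space and Ẑ, Z bounded positive self-adjoint invertible operators on H. Define C := Z^{-1/2} Ẑ^{1/2} and M := Ẑ^{-1/2}(Z - Ẑ)Z^{-1/2}. Then ‖M‖² ≤ ‖(C C*)^{-1} - Id‖ + ‖C C* - Id‖, where ‖·‖ denotes operator norm. -/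
/-! With `C = Z^{-1/2} Ẑ^{1/2}` and `D = C⁻¹ = Ẑ^{-1/2} Z^{1/2}`, expanding the squares of the
square roots gives `M = D - C*`. Since `(C C*)⁻¹ = D* D` and `D* C* = C D = 1`,
`M* M = ((C C*)⁻¹ - 1) + (C C* - 1)`, and the C*-identity `‖M* M‖ = ‖M‖²` together with the
triangle inequality gives the bound. -/

open scoped RealInnerProductSpace

section Ring

variable {R : Type*} [Ring R]

theorem mul_sub_mul_self_mul_eq {s s' t t' : R} (hs : s * s' = 1) (ht : t' * t = 1) :
    t' * ((s * s - t * t) * s') = t' * s - t * s' := by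
  rw [sub_mul, mul_sub, mul_assoc s, hs, mul_one, ← mul_assoc, ← mul_assoc, ht, one_mul]

variable [StarRing R]

theorem star_sub_star_mul_sub_star {a b : R} (hab : a * b = 1) :
    star (b - star a) * (b - star a) = (star b * b - 1) + (a * star a - 1) := by
  have hstar : star b * star a = 1 := by rw [← star_mul, hab, star_one]
  rw [star_sub, star_star, sub_mul, mul_sub, mul_sub, hstar, hab]
  abel

theorem eq_star_mul_self_of_mul_mul_star_self_eq_one {a b c : R} (hab : a * b = 1)
    (hba : b * a = 1) (hc : c * (a * star a) = 1) : c = star b * b :=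
  left_inv_eq_right_inv hc <| by
    rw [mul_assoc, ← mul_assoc (star a), ← star_mul, hba, star_one, one_mul, hab]

end Ring

theorem norm_sub_star_sq_le {A : Type*} [NormedRing A] [StarRing A] [CStarRing A] {a b : A}
    (hab : a * b = 1) : ‖b - star a‖ ^ 2 ≤ ‖star b * b - 1‖ + ‖a * star a - 1‖ := by
  rw [sq, ← CStarRing.norm_star_mul_self, star_sub_star_mul_sub_star hab]
  exact norm_add_le _ _

theorem stmt_1_general {H : Type*} [NormedAddCommGroup H] [InnerProductSpace ℝ H] [CompleteSpace H]
    (Zh Z Zhsqrt Zsqrt Zhsqrtinv Zsqrtinv CCtinv : H →L[ℝ] H)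
    -- square roots and their inverses
    (hZhsqrt_sa : IsSelfAdjoint Zhsqrt) (hZhsqrt : Zhsqrt ∘L Zhsqrt = Zh)
    (hZsqrt : Zsqrt ∘L Zsqrt = Z)
    (hZs_sa : IsSelfAdjoint Zsqrtinv)
    (hZhsinv₁ : Zhsqrt ∘L Zhsqrtinv = 1) (hZhsinv₂ : Zhsqrtinv ∘L Zhsqrt = 1)
    (hZsinv₁ : Zsqrt ∘L Zsqrtinv = 1) (hZsinv₂ : Zsqrtinv ∘L Zsqrt = 1)
    -- `CCtinv` is the inverse of `C C*` where `C = Z^{-1/2} Ẑ^{1/2}`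
    (hCCtinv₂ : CCtinv ∘L ((Zsqrtinv ∘L Zhsqrt) ∘L
        ContinuousLinearMap.adjoint (Zsqrtinv ∘L Zhsqrt)) = 1) :
    ‖Zhsqrtinv ∘L (Z - Zh) ∘L Zsqrtinv‖ ^ 2 ≤
      ‖CCtinv - 1‖ +
        ‖(Zsqrtinv ∘L Zhsqrt) ∘L
            ContinuousLinearMap.adjoint (Zsqrtinv ∘L Zhsqrt) - 1‖ := by
  simp only [← ContinuousLinearMap.mul_def, ← ContinuousLinearMap.star_eq_adjoint] at *
  have hCD : Zsqrtinv * Zhsqrt * (Zhsqrtinv * Zsqrt) = 1 := by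
    rw [mul_assoc, ← mul_assoc Zhsqrt, hZhsinv₁, one_mul, hZsinv₂]
  have hDC : Zhsqrtinv * Zsqrt * (Zsqrtinv * Zhsqrt) = 1 := by
    rw [mul_assoc, ← mul_assoc Zsqrt, hZsinv₁, one_mul, hZhsinv₂]
  have hM : Zhsqrtinv * ((Z - Zh) * Zsqrtinv) =
      Zhsqrtinv * Zsqrt - star (Zsqrtinv * Zhsqrt) := by
    rw [star_mul, hZs_sa.star_eq, hZhsqrt_sa.star_eq, ← hZsqrt, ← hZhsqrt]
    exact mul_sub_mul_self_mul_eq hZsinv₁ hZhsinv₂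
  rw [hM, eq_star_mul_self_of_mul_mul_star_self_eq_one hCD hDC hCCtinv₂]
  exact norm_sub_star_sq_le hCD

/-- With `C = Z^{-1/2} Ẑ^{1/2}` and `M = Ẑ^{-1/2}(Z - Ẑ)Z^{-1/2}`,
we have `‖M‖² ≤ ‖(C C*)⁻¹ - Id‖ + ‖C C* - Id‖`. -/
theorem stmt_1 {H : Type*} [NormedAddCommGroup H] [InnerProductSpace ℝ H] [CompleteSpace H]
    (Zh Z Zhinv Zinv Zhsqrt Zsqrt Zhsqrtinv Zsqrtinv CCtinv : H →L[ℝ] H)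
    (hZh_sa : IsSelfAdjoint Zh) (hZ_sa : IsSelfAdjoint Z)
    (hZh_pos : ∀ ψ : H, ψ ≠ 0 → 0 < ⟪ψ, Zh ψ⟫)
    (hZ_pos : ∀ ψ : H, ψ ≠ 0 → 0 < ⟪ψ, Z ψ⟫)
    (hZhinv₁ : Zh ∘L Zhinv = 1) (hZhinv₂ : Zhinv ∘L Zh = 1)
    (hZinv₁ : Z ∘L Zinv = 1) (hZinv₂ : Zinv ∘L Z = 1)
    -- square roots and their inverses
    (hZhsqrt_sa : IsSelfAdjoint Zhsqrt) (hZhsqrt : Zhsqrt ∘L Zhsqrt = Zh)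
    (hZsqrt_sa : IsSelfAdjoint Zsqrt) (hZsqrt : Zsqrt ∘L Zsqrt = Z)
    (hZhs_sa : IsSelfAdjoint Zhsqrtinv) (hZhs : Zhsqrtinv ∘L Zhsqrtinv = Zhinv)
    (hZs_sa : IsSelfAdjoint Zsqrtinv) (hZs : Zsqrtinv ∘L Zsqrtinv = Zinv)
    (hZhsinv₁ : Zhsqrt ∘L Zhsqrtinv = 1) (hZhsinv₂ : Zhsqrtinv ∘L Zhsqrt = 1)
    (hZsinv₁ : Zsqrt ∘L Zsqrtinv = 1) (hZsinv₂ : Zsqrtinv ∘L Zsqrt = 1)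
    -- `CCtinv` is the inverse of `C C*` where `C = Z^{-1/2} Ẑ^{1/2}`
    (hCCtinv₁ : ((Zsqrtinv ∘L Zhsqrt) ∘L
        ContinuousLinearMap.adjoint (Zsqrtinv ∘L Zhsqrt)) ∘L CCtinv = 1)
    (hCCtinv₂ : CCtinv ∘L ((Zsqrtinv ∘L Zhsqrt) ∘L
        ContinuousLinearMap.adjoint (Zsqrtinv ∘L Zhsqrt)) = 1) :
    ‖Zhsqrtinv ∘L (Z - Zh) ∘L Zsqrtinv‖ ^ 2 ≤
      ‖CCtinv - 1‖ +
        ‖(Zsqrtinv ∘L Zhsqrt) ∘L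
            ContinuousLinearMap.adjoint (Zsqrtinv ∘L Zhsqrt) - 1‖ :=
  stmt_1_general Zh Z Zhsqrt Zsqrt Zhsqrtinv Zsqrtinv CCtinv hZhsqrt_sa hZhsqrt hZsqrt hZs_sa
    hZhsinv₁ hZhsinv₂ hZsinv₁ hZsinv₂ hCCtinv₂
end

section
/- Combining the previous two facts: if Ẑ, Z are bounded positive self-adjoint invertible operators on a Hilbert space with ‖Z^{-1/2} Ẑ Z^{-1/2} - Id‖ ≤ b for some b ∈ (0, 1/3), then for every ψ in the Hilbert space, ⟨ψ, Ẑ^{-1}ψ⟩ ≤ (√(1-b) / (√(1-b) - √(2b))) · ⟨ψ, Z^{-1}ψ⟩. -/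
/-!
Conjugating by `S = Z^{-1/2}` turns the claim into a bound for the right inverse `B` of
`A = S Ẑ S`: since `Ẑ⁻¹ = S B S` and `⟨ψ, Z⁻¹ ψ⟩ = ‖S ψ‖²`, it suffices that `‖B‖ ≤ (1 - b)⁻¹`.
That follows from `B = 1 + (1 - A) B` and `‖1 - A‖ ≤ b < 1`, without any Neumann series.
The stated constant dominates `(1 - b)⁻¹` because `b √(1 - b) ≤ √(2b)`.
-/

open scoped RealInnerProductSpace

theorem norm_le_norm_one_div_of_mul_eq_one {R : Type*} [SeminormedRing R] {a c : R} {b : ℝ}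
    (hac : a * c = 1) (ha : ‖a - 1‖ ≤ b) (hb : b < 1) : ‖c‖ ≤ ‖(1 : R)‖ / (1 - b) := by
  have hc : c = 1 + (1 - a) * c := by rw [sub_mul, hac, one_mul, add_sub_cancel]
  have : ‖c‖ ≤ ‖(1 : R)‖ + b * ‖c‖ :=
    calc ‖c‖ = ‖1 + (1 - a) * c‖ := congrArg norm hc
      _ ≤ ‖(1 : R)‖ + ‖1 - a‖ * ‖c‖ := (norm_add_le _ _).trans (by gcongr; exact norm_mul_le _ _)
      _ ≤ ‖(1 : R)‖ + b * ‖c‖ := by rw [norm_sub_rev]; gcongr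
  rw [le_div_iff₀ (sub_pos.2 hb)]
  linarith

theorem inv_one_sub_le_sqrt_div_sqrt_sub_sqrt {b : ℝ} (hb₀ : 0 ≤ b) (hb : b < 1 / 3) :
    (1 - b)⁻¹ ≤ √(1 - b) / (√(1 - b) - √(2 * b)) := by
  have hsqrt : √(2 * b) < √(1 - b) := Real.sqrt_lt_sqrt (by positivity) (by linarith)
  have hkey : b * √(1 - b) ≤ √(2 * b) := by
    calc b * √(1 - b) = √(b ^ 2 * (1 - b)) := by
          rw [Real.sqrt_mul (sq_nonneg b), Real.sqrt_sq hb₀]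
      _ ≤ √(2 * b) := Real.sqrt_le_sqrt (by nlinarith)
  rw [inv_eq_one_div, div_le_div_iff₀ (by linarith) (by linarith)]
  linarith

section InnerProductSpace

variable {H : Type*} [NormedAddCommGroup H] [InnerProductSpace ℝ H]

theorem real_inner_apply_le_opNorm_mul_sq (T : H →L[ℝ] H) (x : H) :
    ⟪x, T x⟫ ≤ ‖T‖ * ‖x‖ ^ 2 :=
  calc ⟪x, T x⟫ ≤ ‖x‖ * ‖T x‖ := real_inner_le_norm _ _
    _ ≤ ‖x‖ * (‖T‖ * ‖x‖) := by gcongr; exact T.le_opNorm x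
    _ = ‖T‖ * ‖x‖ ^ 2 := by ring

variable [CompleteSpace H] {S : H →L[ℝ] H}

theorem IsSelfAdjoint.real_inner_mul_self_apply (hS : IsSelfAdjoint S) (x : H) :
    ⟪x, (S * S) x⟫ = ‖S x‖ ^ 2 := by
  rw [mul_apply_eq_comp, ← real_inner_self_eq_norm_sq]
  exact (hS.isSymmetric _ _).symm

theorem IsSelfAdjoint.real_inner_apply_le_of_norm_conj_sub_one_le (hS : IsSelfAdjoint S)
    (hS_unit : IsUnit S) {T W : H →L[ℝ] H} (hTW : T * W = 1) {b : ℝ}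
    (hb : ‖S * T * S - 1‖ ≤ b) (hb₁ : b < 1) (ψ : H) :
    ⟪ψ, W ψ⟫ ≤ (1 - b)⁻¹ * ‖S ψ‖ ^ 2 := by
  obtain ⟨u, rfl⟩ := hS_unit
  set B : H →L[ℝ] H := ↑u⁻¹ * W * ↑u⁻¹
  have hW : W = u * B * u := by simp [B, mul_assoc]
  have hAB : (u * T * u) * B = 1 := by simp [B, mul_assoc, ← mul_assoc T, hTW]
  set S : H →L[ℝ] H := ↑u
  have hB : ‖B‖ ≤ (1 - b)⁻¹ := by
    have h1 : ‖(1 : H →L[ℝ] H)‖ ≤ 1 := ContinuousLinearMap.norm_id_le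
    rw [inv_eq_one_div]
    exact (norm_le_norm_one_div_of_mul_eq_one hAB hb hb₁).trans (by gcongr)
  calc ⟪ψ, W ψ⟫ = ⟪S ψ, B (S ψ)⟫ := by
        rw [hW, mul_apply_eq_comp, mul_apply_eq_comp]
        exact (hS.isSymmetric _ _).symm
    _ ≤ ‖B‖ * ‖S ψ‖ ^ 2 := real_inner_apply_le_opNorm_mul_sq B _
    _ ≤ (1 - b)⁻¹ * ‖S ψ‖ ^ 2 := by gcongr

end InnerProductSpace

theorem stmt_3_general {H : Type*} [NormedAddCommGroup H] [InnerProductSpace ℝ H] [CompleteSpace H]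
    (Zh Z Zhinv Zinv Zsqrtinv : H →L[ℝ] H)
    (hZhinv₁ : Zh ∘L Zhinv = 1)
    (hZinv₁ : Z ∘L Zinv = 1) (hZinv₂ : Zinv ∘L Z = 1)
    -- `Zsqrtinv` is the (self-adjoint, positive) inverse square root of `Z`
    (hZs_sa : IsSelfAdjoint Zsqrtinv)
    (hZs : Zsqrtinv ∘L Zsqrtinv = Zinv)
    (b : ℝ) (hb : b ∈ Set.Ioo (0 : ℝ) (1 / 3))
    (hbnd : ‖Zsqrtinv ∘L Zh ∘L Zsqrtinv - 1‖ ≤ b) :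
    ∀ ψ : H, ⟪ψ, Zhinv ψ⟫ ≤
      (Real.sqrt (1 - b) / (Real.sqrt (1 - b) - Real.sqrt (2 * b))) * ⟪ψ, Zinv ψ⟫ := by
  intro ψ
  have hZinv_unit : IsUnit Zinv := ⟨⟨Zinv, Z, hZinv₂, hZinv₁⟩, rfl⟩
  have hZs_unit : IsUnit Zsqrtinv := isUnit_mul_self_iff.1 (by rwa [ContinuousLinearMap.mul_def, hZs])
  have hbnd' : ‖Zsqrtinv * Zh * Zsqrtinv - 1‖ ≤ b := by rwa [mul_assoc]
  rw [← hZs, ← ContinuousLinearMap.mul_def, hZs_sa.real_inner_mul_self_apply]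
  calc ⟪ψ, Zhinv ψ⟫ ≤ (1 - b)⁻¹ * ‖Zsqrtinv ψ‖ ^ 2 :=
        hZs_sa.real_inner_apply_le_of_norm_conj_sub_one_le hZs_unit hZhinv₁ hbnd' (by linarith [hb.2]) ψ
    _ ≤ _ := by gcongr; exact inv_one_sub_le_sqrt_div_sqrt_sub_sqrt hb.1.le hb.2

/-- If `‖Z^{-1/2} Ẑ Z^{-1/2} - Id‖ ≤ b` with `b ∈ (0, 1/3)`, then for all `ψ`,
`⟨ψ, Ẑ⁻¹ ψ⟩ ≤ (√(1-b) / (√(1-b) - √(2b))) ⟨ψ, Z⁻¹ ψ⟩`. -/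
theorem stmt_3 {H : Type*} [NormedAddCommGroup H] [InnerProductSpace ℝ H] [CompleteSpace H]
    (Zh Z Zhinv Zinv Zsqrtinv : H →L[ℝ] H)
    (hZh_sa : IsSelfAdjoint Zh) (hZ_sa : IsSelfAdjoint Z)
    (hZh_pos : ∀ ψ : H, ψ ≠ 0 → 0 < ⟪ψ, Zh ψ⟫)
    (hZ_pos : ∀ ψ : H, ψ ≠ 0 → 0 < ⟪ψ, Z ψ⟫)
    (hZhinv₁ : Zh ∘L Zhinv = 1) (hZhinv₂ : Zhinv ∘L Zh = 1)
    (hZinv₁ : Z ∘L Zinv = 1) (hZinv₂ : Zinv ∘L Z = 1)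
    -- `Zsqrtinv` is the (self-adjoint, positive) inverse square root of `Z`
    (hZs_sa : IsSelfAdjoint Zsqrtinv)
    (hZs_pos : ∀ ψ : H, ψ ≠ 0 → 0 < ⟪ψ, Zsqrtinv ψ⟫)
    (hZs : Zsqrtinv ∘L Zsqrtinv = Zinv)
    (b : ℝ) (hb : b ∈ Set.Ioo (0 : ℝ) (1 / 3))
    (hbnd : ‖Zsqrtinv ∘L Zh ∘L Zsqrtinv - 1‖ ≤ b) :
    ∀ ψ : H, ⟪ψ, Zhinv ψ⟫ ≤
      (Real.sqrt (1 - b) / (Real.sqrt (1 - b) - Real.sqrt (2 * b))) * ⟪ψ, Zinv ψ⟫ :=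
  stmt_3_general Zh Z Zhinv Zinv Zsqrtinv hZhinv₁ hZinv₁ hZinv₂ hZs_sa hZs b hb hbnd
end

section
/- Let A and B be n×n real symmetric positive semidefinite matrices with all eigenvalues of B lying in the interval [1,2], and τ > 0. Then log det(I + τ^{-1} B^{-1/2} A B^{-1/2}) ≥ log det(I + (2τ)^{-1} A). -/
/-!
With `E = B^{-1/2} A B^{-1/2}` we have `A = B^{1/2} E B^{1/2}`, so Sylvester's identity
`det (1 + X Y) = det (1 + Y X)` turns `det (1 + (2τ)⁻¹ A)` into
`det (1 + (2τ)⁻¹ E^{1/2} B E^{1/2})`.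
Since `B ≤ 2`, conjugating by `E^{1/2}` gives `E^{1/2} B E^{1/2} ≤ 2 E`, and the determinant is
monotone for the Loewner order on positive definite matrices.
-/

open Matrix
open scoped MatrixOrder

namespace Matrix

variable {n : Type*} [Fintype n] [DecidableEq n]

theorem one_le_det_of_one_le {N : Matrix n n ℝ} (h : 1 ≤ N) : 1 ≤ N.det := by
  have hN : N.IsHermitian := by
    simpa using (le_iff.mp h).isHermitian.add (isHermitian_one : (1 : Matrix n n ℝ).IsHermitian)
  have hspec := (CFC.one_le_iff (R := ℝ) N hN.isSelfAdjoint).mp h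
  rw [hN.spectrum_real_eq_range_eigenvalues] at hspec
  rw [hN.det_eq_prod_eigenvalues]
  exact Finset.one_le_prod fun i _ => by simpa using hspec _ (Set.mem_range_self i)

theorem isUnit_det_of_mul_self_eq {S M : Matrix n n ℝ} (hM : M.PosDef) (h : S * S = M) :
    IsUnit S.det :=
  isUnit_iff_ne_zero.mpr fun h0 => hM.det_pos.ne' (by rw [← h, det_mul, h0, zero_mul])

-- Conjugating by `M^{-1/2}` reduces to the case `M = 1`.
theorem det_le_det_of_le {M N : Matrix n n ℝ} (hM : M.PosDef) (h : M ≤ N) : M.det ≤ N.det := by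
  set S := CFC.sqrt M
  have hSS : S * S = M := CFC.sqrt_mul_sqrt_self M hM.posSemidef.nonneg
  have hS : IsUnit S.det := isUnit_det_of_mul_self_eq hM hSS
  have hT : IsSelfAdjoint S⁻¹ := (CFC.sqrt_nonneg M).posSemidef.isHermitian.inv
  have hTMT : S⁻¹ * M * S⁻¹ = 1 := by
    rw [← hSS, ← mul_assoc, nonsing_inv_mul S hS, one_mul, mul_nonsing_inv S hS]
  have h1 : 1 ≤ S⁻¹ * N * S⁻¹ := hTMT ▸ hT.conjugate_le_conjugate h
  have hdetM : S⁻¹.det * S⁻¹.det * M.det = 1 := by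
    simpa [det_mul, mul_right_comm] using congrArg det hTMT
  have hdetN : 1 ≤ S⁻¹.det * S⁻¹.det * N.det := by
    simpa [det_mul, mul_right_comm] using one_le_det_of_one_le h1
  have hpos : 0 < S⁻¹.det * S⁻¹.det := mul_self_pos.mpr fun h0 => by simp [h0] at hdetM
  exact le_of_mul_le_mul_left (hdetM.trans_le hdetN) hpos

theorem det_one_add_smul_mul_mul_mul_comm (c : ℝ) (X Y : Matrix n n ℝ) :
    (1 + c • (X * Y * Y * X)).det = (1 + c • (Y * X * X * Y)).det := by
  simpa only [smul_mul_assoc, mul_smul_comm, mul_assoc] using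
    det_one_add_mul_comm (c • (X * Y)) (Y * X)

end Matrix

/-- If `A`, `B` are PSD with the eigenvalues of `B` in `[1,2]`
(i.e. `I ⪯ B ⪯ 2I`), `Bs = B^{1/2}`, and `τ > 0`, then
`log det(I + τ⁻¹ B^{-1/2} A B^{-1/2}) ≥ log det(I + (2τ)⁻¹ A)`. -/
theorem stmt_9 {n : ℕ} (A B Bs : Matrix (Fin n) (Fin n) ℝ) (τ : ℝ) (hτ : 0 < τ)
    (hA : A.PosSemidef)
    (hB_lower : (B - 1).PosSemidef)
    (hB_upper : ((2 : ℝ) • (1 : Matrix (Fin n) (Fin n) ℝ) - B).PosSemidef)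
    (hBs : Bs.PosSemidef) (hBs_sq : Bs * Bs = B) :
    Real.log (1 + (2 * τ)⁻¹ • A).det ≤
      Real.log (1 + τ⁻¹ • (Bs⁻¹ * A * Bs⁻¹)).det := by
  have hB : B.PosDef := by simpa using PosDef.one.add_posSemidef hB_lower
  have hBs_unit : IsUnit Bs.det := isUnit_det_of_mul_self_eq hB hBs_sq
  set E := Bs⁻¹ * A * Bs⁻¹
  have hE : E.PosSemidef := by
    have := hA.conjTranspose_mul_mul_same Bs⁻¹
    rwa [hBs.isHermitian.inv.eq] at this
  set Es := CFC.sqrt E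
  have hEs : IsSelfAdjoint Es := (CFC.sqrt_nonneg E).posSemidef.isHermitian
  have hEs_sq : Es * Es = E := CFC.sqrt_mul_sqrt_self E hE.nonneg
  have hA_eq : A = Bs * Es * Es * Bs := by
    rw [mul_assoc Bs, hEs_sq]
    simp only [E, ← mul_assoc, mul_nonsing_inv Bs hBs_unit, one_mul]
    rw [mul_assoc, nonsing_inv_mul Bs hBs_unit, mul_one]
  have hsandwich : Es * B * Es ≤ (2 : ℝ) • E := by
    have := hEs.conjugate_le_conjugate (le_iff.mpr hB_upper)
    rwa [mul_smul_comm, mul_one, smul_mul_assoc, hEs_sq] at this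
  have hle : 1 + (2 * τ)⁻¹ • (Es * B * Es) ≤ 1 + τ⁻¹ • E := by
    have h2τ : τ⁻¹ • E = (2 * τ)⁻¹ • (2 : ℝ) • E := by
      rw [smul_smul]
      congr 1
      field_simp
    rw [h2τ]
    gcongr
  have hM : (1 + (2 * τ)⁻¹ • (Es * B * Es)).PosDef :=
    PosDef.one.add_posSemidef ((hEs.conjugate_nonneg hB.posSemidef.nonneg).posSemidef.smul
      (by positivity))
  rw [hA_eq, det_one_add_smul_mul_mul_mul_comm, mul_assoc Es Bs Bs, hBs_sq]
  exact Real.log_le_log hM.det_pos (det_le_det_of_le hM hle)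
end
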